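/- Let d̄ be the weighted path distance with weight exp(η‖·‖)/ε on a Hilbert space, and let p_x = (1−2δ)^{1/2}x + √(2δ)ξ, p_y = (1−2δ)^{1/2}y + √(2δ)ξ be pCN proposals with shared noise ξ. Write ρ = 1 − (1−2δ)^{1/2}. Then for any x ≠ y with d̄(x,y) < 1: d̄(p_x, p_y)/d̄(x,y) ≤ (1−2δ)^{1/2}·exp(−ηρ(‖x‖∨‖y‖) + η(√(2δ)‖ξ‖ + J)), where J = ε·exp(−η·max(‖x‖∨‖y‖−ε,0)). -/

import Mathlib

open Real

/-- The weighted path distance with weight `exp(η‖·‖)/ε`: infimum over unit-speed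
`C¹` paths from `x` to `y` of `(1/ε)∫₀ᵀ exp(η‖ψ(t)‖) dt`. -/
noncomputable def pathDist {H : Type*} [NormedAddCommGroup H] [InnerProductSpace ℝ H]
    (ε η : ℝ) (x y : H) : ℝ :=
  sInf { r : ℝ | ∃ T : ℝ, 0 < T ∧ ∃ ψ ψ' : ℝ → H, ψ 0 = x ∧ ψ T = y ∧
    (∀ t ∈ Set.Icc (0:ℝ) T, HasDerivAt ψ (ψ' t) t ∧ ‖ψ' t‖ = 1) ∧
    r = (1/ε) * ∫ t in (0:ℝ)..T, exp (η * ‖ψ t‖) }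

/-!
A path of cost below `1` is short: since the weight is at least `1`, its length `T` is below
`ε`, and since it has unit speed it stays within `T` of both endpoints, so its norm is at least
`max (‖x‖ ∨ ‖y‖ - ε) 0` throughout. Feeding this back into the cost gives `T < J`, hence the
norm along the path is at least `‖x‖ ∨ ‖y‖ - J`, and as `T ≥ ‖x - y‖` we get
`d̄(x, y) ≥ (‖x - y‖ / ε) exp (η (‖x‖ ∨ ‖y‖ - J))`. On the other side, the straight segment gives
`d̄(u, v) ≤ (‖u - v‖ / ε) exp (η (‖u‖ ∨ ‖v‖))`, and the pCN map multiplies differences by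
`(1 - 2δ)^{1/2}` while sending norms at most `‖x‖ ∨ ‖y‖` to norms at most
`(1 - 2δ)^{1/2} (‖x‖ ∨ ‖y‖) + √(2δ) ‖ξ‖`.
-/

open Set Filter Topology

section UnitSpeedPath

variable {E : Type*} [NormedAddCommGroup E] [NormedSpace ℝ E]

def IsUnitSpeedPath (ψ ψ' : ℝ → E) (T : ℝ) : Prop :=
  ∀ t ∈ Icc (0:ℝ) T, HasDerivAt ψ (ψ' t) t ∧ ‖ψ' t‖ = 1

noncomputable def pathCost (ε η : ℝ) (ψ : ℝ → E) (T : ℝ) : ℝ :=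
  (1/ε) * ∫ t in (0:ℝ)..T, exp (η * ‖ψ t‖)

namespace IsUnitSpeedPath

variable {ψ ψ' : ℝ → E} {T : ℝ}

lemma norm_sub_le (hψ : IsUnitSpeedPath ψ ψ' T) {a b : ℝ} (ha : 0 ≤ a) (hab : a ≤ b)
    (hb : b ≤ T) : ‖ψ b - ψ a‖ ≤ b - a := by
  have hderiv : ∀ t ∈ Icc a b, HasDerivWithinAt ψ (ψ' t) (Icc a b) t := fun t ht =>
    (hψ t ⟨ha.trans ht.1, ht.2.trans hb⟩).1.hasDerivWithinAt
  have hspeed : ∀ t ∈ Ico a b, ‖ψ' t‖ ≤ 1 := fun t ht =>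
    (hψ t ⟨ha.trans ht.1, ht.2.le.trans hb⟩).2.le
  simpa using norm_image_sub_le_of_norm_deriv_le_segment' hderiv hspeed b (right_mem_Icc.2 hab)

lemma max_norm_sub_le_norm (hψ : IsUnitSpeedPath ψ ψ' T) {t : ℝ} (ht : t ∈ Icc 0 T) :
    max ‖ψ 0‖ ‖ψ T‖ - T ≤ ‖ψ t‖ := by
  have h0 := hψ.norm_sub_le le_rfl ht.1 ht.2
  have hT := hψ.norm_sub_le ht.1 ht.2 le_rfl
  have h0' := norm_sub_norm_le (ψ 0) (ψ t)
  have hT' := norm_sub_norm_le (ψ T) (ψ t)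
  rw [norm_sub_rev] at h0'
  rw [← max_sub_sub_right, max_le_iff]
  constructor <;> linarith [ht.1, ht.2]

lemma intervalIntegrable_exp_mul_norm (hψ : IsUnitSpeedPath ψ ψ' T) (hT : 0 ≤ T) (η : ℝ) :
    IntervalIntegrable (fun t => exp (η * ‖ψ t‖)) MeasureTheory.volume 0 T := by
  have hcont : ContinuousOn ψ (Icc 0 T) := fun t ht =>
    (hψ t ht).1.continuousAt.continuousWithinAt
  refine ContinuousOn.intervalIntegrable ?_
  rw [uIcc_of_le hT]
  fun_prop

lemma rescale (hψ : IsUnitSpeedPath ψ ψ' T) (p : E) {l : ℝ} (hl : 0 < l) :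
    IsUnitSpeedPath (fun t => p + l • (ψ (t / l) - p)) (fun t => ψ' (t / l)) (l * T) := by
  intro t ht
  have ht' : t / l ∈ Icc 0 T :=
    ⟨div_nonneg ht.1 hl.le, (div_le_iff₀ hl).2 (by linarith [ht.2])⟩
  have hinner : HasDerivAt (fun s : ℝ => s / l) (1 / l) t := by
    simpa using (hasDerivAt_id t).div_const l
  have hderiv := (((hψ _ ht').1.scomp t hinner).sub_const p).const_smul l |>.const_add p
  rw [smul_smul, mul_one_div_cancel hl.ne', one_smul] at hderiv
  exact ⟨hderiv, (hψ _ ht').2⟩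

end IsUnitSpeedPath

lemma isUnitSpeedPath_segment {u v : E} (huv : u ≠ v) :
    IsUnitSpeedPath (fun t => u + (t / ‖v - u‖) • (v - u)) (fun _ => (1 / ‖v - u‖) • (v - u))
      ‖v - u‖ := by
  have hL : ‖v - u‖ ≠ 0 := norm_ne_zero_iff.2 (sub_ne_zero.2 huv.symm)
  refine fun t _ => ⟨?_, ?_⟩
  · simpa using (((hasDerivAt_id t).div_const ‖v - u‖).smul_const (v - u)).const_add u
  · rw [norm_smul, norm_div, norm_one, norm_norm, one_div_mul_cancel hL]

variable {ε η T R : ℝ} {ψ ψ' : ℝ → E}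

lemma pathCost_le_of_forall_norm_le (hε : 0 < ε) (hη : 0 ≤ η) (hT : 0 ≤ T)
    (hψ : IsUnitSpeedPath ψ ψ' T) (hR : ∀ t ∈ Icc 0 T, ‖ψ t‖ ≤ R) :
    pathCost ε η ψ T ≤ T / ε * exp (η * R) := by
  have hint := intervalIntegral.integral_mono_on hT (hψ.intervalIntegrable_exp_mul_norm hT η)
    intervalIntegrable_const fun t ht => exp_le_exp.2 (mul_le_mul_of_nonneg_left (hR t ht) hη)
  rw [intervalIntegral.integral_const, sub_zero, smul_eq_mul] at hint
  calc pathCost ε η ψ T ≤ 1 / ε * (T * exp (η * R)) := by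
        unfold pathCost; gcongr
    _ = T / ε * exp (η * R) := by ring

lemma le_pathCost_of_forall_le_norm (hε : 0 < ε) (hη : 0 ≤ η) (hT : 0 ≤ T)
    (hψ : IsUnitSpeedPath ψ ψ' T) (hR : ∀ t ∈ Icc 0 T, R ≤ ‖ψ t‖) :
    T / ε * exp (η * R) ≤ pathCost ε η ψ T := by
  have hint := intervalIntegral.integral_mono_on hT intervalIntegrable_const
    (hψ.intervalIntegrable_exp_mul_norm hT η)
    fun t ht => exp_le_exp.2 (mul_le_mul_of_nonneg_left (hR t ht) hη)
  rw [intervalIntegral.integral_const, sub_zero, smul_eq_mul] at hint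
  calc T / ε * exp (η * R) = 1 / ε * (T * exp (η * R)) := by ring
    _ ≤ pathCost ε η ψ T := by unfold pathCost; gcongr

lemma le_pathCost_of_pathCost_lt_one (hε : 0 < ε) (hη : 0 ≤ η) (hT : 0 ≤ T)
    (hψ : IsUnitSpeedPath ψ ψ' T) (hcost : pathCost ε η ψ T < 1) :
    ‖ψ 0 - ψ T‖ / ε *
        exp (η * (max ‖ψ 0‖ ‖ψ T‖ - ε * exp (-η * max (max ‖ψ 0‖ ‖ψ T‖ - ε) 0)))
      ≤ pathCost ε η ψ T := by
  set M := max ‖ψ 0‖ ‖ψ T‖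
  set K := max (M - ε) 0
  have hTε : T < ε := by
    have := le_pathCost_of_forall_le_norm hε hη hT hψ fun t _ => norm_nonneg (ψ t)
    rw [mul_zero, exp_zero, mul_one] at this
    exact (div_lt_one hε).1 (this.trans_lt hcost)
  have hnorm : ∀ t ∈ Icc 0 T, M - T ≤ ‖ψ t‖ := fun t ht => hψ.max_norm_sub_le_norm ht
  have hTJ : T < ε * exp (-η * K) := by
    have := le_pathCost_of_forall_le_norm (R := K) hε hη hT hψ fun t ht =>
      max_le (by linarith [hnorm t ht]) (norm_nonneg _)
    have hlt : T / ε * exp (η * K) < 1 := this.trans_lt hcost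
    rw [neg_mul, exp_neg, ← div_eq_mul_inv, lt_div_iff₀ (exp_pos _)]
    rwa [div_mul_eq_mul_div, div_lt_one hε] at hlt
  have hlen : ‖ψ 0 - ψ T‖ ≤ T := by
    simpa [norm_sub_rev] using hψ.norm_sub_le le_rfl hT le_rfl
  calc ‖ψ 0 - ψ T‖ / ε * exp (η * (M - ε * exp (-η * K)))
      ≤ T / ε * exp (η * (M - ε * exp (-η * K))) := by gcongr
    _ ≤ pathCost ε η ψ T :=
        le_pathCost_of_forall_le_norm hε hη hT hψ fun t ht => by linarith [hnorm t ht]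

end UnitSpeedPath

section PathDist

variable {H : Type*} [NormedAddCommGroup H] [InnerProductSpace ℝ H] {ε η : ℝ}

def pathCosts (ε η : ℝ) (x y : H) : Set ℝ :=
  {r | ∃ T, 0 < T ∧ ∃ ψ ψ' : ℝ → H, ψ 0 = x ∧ ψ T = y ∧ IsUnitSpeedPath ψ ψ' T ∧
    r = pathCost ε η ψ T}

lemma pathDist_eq_sInf_pathCosts (ε η : ℝ) (x y : H) :
    pathDist ε η x y = sInf (pathCosts ε η x y) := rfl

lemma nonneg_of_mem_pathCosts (hε : 0 < ε) {x y : H} {r : ℝ} (hr : r ∈ pathCosts ε η x y) :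
    0 ≤ r := by
  obtain ⟨T, hT, ψ, ψ', -, -, -, rfl⟩ := hr
  unfold pathCost
  have := intervalIntegral.integral_nonneg (μ := MeasureTheory.volume) hT.le
    fun t _ => (exp_pos (η * ‖ψ t‖)).le
  positivity

lemma pathDist_nonneg (hε : 0 < ε) (x y : H) : 0 ≤ pathDist ε η x y :=
  Real.sInf_nonneg fun _ => nonneg_of_mem_pathCosts hε

lemma pathDist_le_of_mem_pathCosts (hε : 0 < ε) {x y : H} {r : ℝ}
    (hr : r ∈ pathCosts ε η x y) : pathDist ε η x y ≤ r :=
  csInf_le ⟨0, fun _ => nonneg_of_mem_pathCosts hε⟩ hr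

-- With no unit-speed loop at `p` (as in dimension one) this is the junk value `sInf ∅ = 0`;
-- otherwise shrinking a loop by a factor `l` shrinks its cost linearly in `l`.
lemma pathDist_self (hε : 0 < ε) (hη : 0 ≤ η) (p : H) : pathDist ε η p p = 0 := by
  refine le_antisymm ?_ (pathDist_nonneg hε p p)
  rcases (pathCosts ε η p p).eq_empty_or_nonempty with hempty | ⟨-, T, hT, ψ, ψ', h0, hT', hψ, -⟩
  · rw [pathDist_eq_sInf_pathCosts, hempty, Real.sInf_empty]
  set C := T / ε * exp (η * (‖p‖ + T))
  have hshrink : ∀ l ∈ Ioc (0:ℝ) 1, pathDist ε η p p ≤ l * C := by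
    rintro l ⟨hl0, hl1⟩
    have hφ := hψ.rescale p hl0
    have hlT : 0 < l * T := mul_pos hl0 hT
    refine (pathDist_le_of_mem_pathCosts hε ⟨l * T, hlT, _, _, ?_, ?_, hφ, rfl⟩).trans ?_
    · simp [h0]
    · simp [hl0.ne', hT']
    refine (pathCost_le_of_forall_norm_le hε hη hlT.le hφ fun t ht => ?_).trans_eq (by ring)
    have ht' : t / l ∈ Icc 0 T :=
      ⟨div_nonneg ht.1 hl0.le, (div_le_iff₀ hl0).2 (by linarith [ht.2])⟩
    have hlip := hψ.norm_sub_le le_rfl ht'.1 ht'.2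
    rw [h0, sub_zero] at hlip
    calc ‖p + l • (ψ (t / l) - p)‖ ≤ ‖p‖ + l * ‖ψ (t / l) - p‖ := by
          grw [norm_add_le, norm_smul, norm_of_nonneg hl0.le]
      _ ≤ ‖p‖ + l * (t / l) := by gcongr
      _ ≤ ‖p‖ + T := by
          rw [mul_div_cancel₀ _ hl0.ne']; nlinarith [ht.2]
  have hlim : Tendsto (fun l : ℝ => l * C) (𝓝[>] 0) (𝓝 0) :=
    ((continuous_mul_const C).tendsto' 0 0 (zero_mul C)).mono_left nhdsWithin_le_nhds
  exact ge_of_tendsto hlim (mem_of_superset (Ioc_mem_nhdsGT one_pos) hshrink)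

lemma pathDist_le_norm_sub_mul_exp (hε : 0 < ε) (hη : 0 ≤ η) (u v : H) :
    pathDist ε η u v ≤ ‖u - v‖ / ε * exp (η * max ‖u‖ ‖v‖) := by
  rcases eq_or_ne u v with rfl | huv
  · simp [pathDist_self hε hη]
  have hψ := isUnitSpeedPath_segment huv
  have hL : 0 < ‖v - u‖ := norm_pos_iff.2 (sub_ne_zero.2 huv.symm)
  refine (pathDist_le_of_mem_pathCosts hε ⟨_, hL, _, _, by simp, by simp [hL.ne'], hψ, rfl⟩).trans
    ((pathCost_le_of_forall_norm_le hε hη hL.le hψ fun t ht => ?_).trans_eq (by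
      rw [norm_sub_rev]))
  refine convexOn_univ_norm.le_on_segment (mem_univ u) (mem_univ v) ?_
  rw [segment_eq_image']
  exact ⟨t / ‖v - u‖, ⟨div_nonneg ht.1 hL.le, div_le_one_of_le₀ ht.2 hL.le⟩, rfl⟩

lemma le_pathDist_of_pathDist_lt_one (hε : 0 < ε) (hη : 0 ≤ η) {x y : H}
    (hsmall : pathDist ε η x y < 1) :
    ‖x - y‖ / ε * exp (η * (max ‖x‖ ‖y‖ - ε * exp (-η * max (max ‖x‖ ‖y‖ - ε) 0)))
      ≤ pathDist ε η x y := by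
  rcases eq_or_ne x y with rfl | hxy
  · simpa using pathDist_nonneg hε x x
  have hL : 0 < ‖y - x‖ := norm_pos_iff.2 (sub_ne_zero.2 hxy.symm)
  have hne : (pathCosts ε η x y).Nonempty :=
    ⟨_, _, hL, _, _, by simp, by simp [hL.ne'], isUnitSpeedPath_segment hxy, rfl⟩
  have hcost : ∀ r ∈ pathCosts ε η x y, r < 1 →
      ‖x - y‖ / ε * exp (η * (max ‖x‖ ‖y‖ - ε * exp (-η * max (max ‖x‖ ‖y‖ - ε) 0))) ≤ r := by
    rintro r ⟨T, hT, ψ, ψ', rfl, rfl, hψ, rfl⟩ hr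
    exact le_pathCost_of_pathCost_lt_one hε hη hT.le hψ hr
  rw [pathDist_eq_sInf_pathCosts] at hsmall ⊢
  obtain ⟨r₀, hr₀, hr₀1⟩ := exists_lt_of_csInf_lt hne hsmall
  refine le_csInf hne fun r hr => ?_
  rcases lt_or_ge r 1 with hr1 | hr1
  · exact hcost r hr hr1
  · exact (hcost r₀ hr₀ hr₀1).trans (hr₀1.le.trans hr1)

lemma pathDist_smul_add_le (hε : 0 < ε) (hη : 0 ≤ η) {a : ℝ} (ha : 0 ≤ a) (x y c : H) :
    pathDist ε η (a • x + c) (a • y + c)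
      ≤ a * ‖x - y‖ / ε * exp (η * (a * max ‖x‖ ‖y‖ + ‖c‖)) := by
  have hdiff : ‖(a • x + c) - (a • y + c)‖ = a * ‖x - y‖ := by
    rw [add_sub_add_right_eq_sub, ← smul_sub, norm_smul, norm_of_nonneg ha]
  have hnorm : ∀ z : H, ‖a • z + c‖ ≤ a * ‖z‖ + ‖c‖ := fun z => by
    grw [norm_add_le, norm_smul, norm_of_nonneg ha]
  refine (pathDist_le_norm_sub_mul_exp hε hη _ _).trans ?_
  rw [hdiff]
  gcongr
  rw [mul_max_of_nonneg _ _ ha, ← max_add_add_right]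
  exact max_le_max (hnorm x) (hnorm y)

end PathDist

theorem stmt_16_general {H : Type*} [NormedAddCommGroup H] [InnerProductSpace ℝ H]
    (ε η δ : ℝ) (hε : 0 < ε) (hη : 0 < η)
    (x y ξ : H)
    (hsmall : pathDist ε η x y < 1) :
    pathDist ε η (Real.sqrt (1 - 2*δ) • x + Real.sqrt (2*δ) • ξ)
        (Real.sqrt (1 - 2*δ) • y + Real.sqrt (2*δ) • ξ)
      / pathDist ε η x y
      ≤ Real.sqrt (1 - 2*δ) *
          exp (-η * (1 - Real.sqrt (1 - 2*δ)) * max ‖x‖ ‖y‖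
            + η * (Real.sqrt (2*δ) * ‖ξ‖ + ε * exp (-η * max (max ‖x‖ ‖y‖ - ε) 0))) := by
  set a := Real.sqrt (1 - 2*δ)
  set b := Real.sqrt (2*δ)
  set M := max ‖x‖ ‖y‖
  set J := ε * exp (-η * max (M - ε) 0)
  have hnum := pathDist_smul_add_le hε hη.le (Real.sqrt_nonneg (1 - 2*δ)) x y (b • ξ)
  rw [norm_smul, norm_of_nonneg (Real.sqrt_nonneg _)] at hnum
  have hden := le_pathDist_of_pathDist_lt_one hε hη.le hsmall
  refine div_le_of_le_mul₀ (pathDist_nonneg hε x y) (by positivity) ?_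
  calc _ ≤ a * ‖x - y‖ / ε * exp (η * (a * M + b * ‖ξ‖)) := hnum
    _ = a * exp (-η * (1 - a) * M + η * (b * ‖ξ‖ + J)) * (‖x - y‖ / ε * exp (η * (M - J))) := by
        rw [show η * (a * M + b * ‖ξ‖) = -η * (1 - a) * M + η * (b * ‖ξ‖ + J) + η * (M - J) by
          ring, exp_add]
        ring
    _ ≤ _ := by gcongr

/-- For pCN proposals `p_x = (1−2δ)^{1/2}x + √(2δ)ξ`, `p_y = (1−2δ)^{1/2}y + √(2δ)ξ`
with shared noise, whenever `x ≠ y` and `d̄(x,y) < 1`: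
`d̄(p_x,p_y)/d̄(x,y) ≤ (1−2δ)^{1/2} exp(−ηρ(‖x‖∨‖y‖) + η(√(2δ)‖ξ‖ + J))`, where
`ρ = 1 − (1−2δ)^{1/2}` and `J = ε exp(−η max(‖x‖∨‖y‖ − ε, 0))`. -/
theorem stmt_16 {H : Type*} [NormedAddCommGroup H] [InnerProductSpace ℝ H]
    (ε η δ : ℝ) (hε : 0 < ε) (hη : 0 < η) (hδ : δ ∈ Set.Ioc (0:ℝ) (1/2))
    (x y ξ : H) (hxy : x ≠ y)
    (hsmall : pathDist ε η x y < 1) :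
    pathDist ε η (Real.sqrt (1 - 2*δ) • x + Real.sqrt (2*δ) • ξ)
        (Real.sqrt (1 - 2*δ) • y + Real.sqrt (2*δ) • ξ)
      / pathDist ε η x y
      ≤ Real.sqrt (1 - 2*δ) *
          exp (-η * (1 - Real.sqrt (1 - 2*δ)) * max ‖x‖ ‖y‖
            + η * (Real.sqrt (2*δ) * ‖ξ‖ + ε * exp (-η * max (max ‖x‖ ‖y‖ - ε) 0))) :=
  stmt_16_general ε η δ hε hη x y ξ hsmall
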